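/- arXiv:1904.00976 — 4 statements merged into one kernel-verified Lean document; each statement's English description precedes it below -/
import Mathlib

section
/- Let τ be a Markov kernel on a measurable space (X, Σ) and R a DT-bisimulation for τ. If x R y, then for all n ≥ 1 and all R-closed measurable sets A₁, …, Aₙ, the iterated integrals agree: ∫_{x₁ ∈ A₁} ⋯ ∫_{xₙ ∈ Aₙ} τ(x, dx₁) τ(x₁, dx₂) ⋯ τ(x_{n−1}, dxₙ) = ∫_{x₁ ∈ A₁} ⋯ ∫_{xₙ ∈ Aₙ} τ(y, dx₁) τ(x₁, dx₂) ⋯ τ(x_{n−1}, dxₙ). -/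
open MeasureTheory ProbabilityTheory

/-- A measurable set `B ⊆ X` is `R`-closed. -/
def DTClosed {X : Type*} (R : X → X → Prop) (B : Set X) : Prop :=
  ∀ x ∈ B, ∀ y, R x y → y ∈ B

/-- A DT-bisimulation for a labelled Markov process `(X, τ, χ)`. -/
def IsDTBisim {X : Type*} [MeasurableSpace X] (τ : Kernel X X)
    {AP : Type*} (χ : AP → X → Bool) (R : X → X → Prop) : Prop :=
  Equivalence R ∧ ∀ x y, R x y →
    (∀ A : AP, χ A x = χ A y) ∧
    ∀ B : Set X, MeasurableSet B → DTClosed R B → τ x B = τ y B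

/-- The iterated integral `∫_{x₁∈A₁}…∫_{xₙ∈Aₙ} τ(x,dx₁) τ(x₁,dx₂) ⋯ τ(x_{n−1},dxₙ)`. -/
noncomputable def iterInt {X : Type*} [MeasurableSpace X] (τ : Kernel X X) :
    (n : ℕ) → (Fin n → Set X) → X → ENNReal
  | 0, _, _ => 1
  | n + 1, A, x => ∫⁻ y in A 0, iterInt τ n (fun i => A i.succ) y ∂(τ x)

/-- The σ-algebra of measurable `R`-closed sets. -/
def invSigma {X : Type*} [m0 : MeasurableSpace X] (R : X → X → Prop)
    (hsymm : ∀ x y, R x y → R y x) : MeasurableSpace X where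
  MeasurableSet' B := MeasurableSet B ∧ DTClosed R B
  measurableSet_empty := ⟨MeasurableSet.empty, fun x hx => absurd hx (Set.notMem_empty x)⟩
  measurableSet_compl s hs := ⟨hs.1.compl, by
    intro a ha b hab hb
    exact ha (hs.2 b hb a (hsymm a b hab))⟩
  measurableSet_iUnion f hf := ⟨MeasurableSet.iUnion fun i => (hf i).1, by
    intro a ha b hab
    obtain ⟨i, hi⟩ := Set.mem_iUnion.mp ha
    exact Set.mem_iUnion.mpr ⟨i, (hf i).2 a hi b hab⟩⟩

lemma key_lintegral_eq {X : Type*} [m0 : MeasurableSpace X] {R : X → X → Prop}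
    (hsymm : ∀ x y, R x y → R y x) (μ ν : Measure X)
    (h : ∀ B : Set X, MeasurableSet B → DTClosed R B → μ B = ν B)
    {f : X → ENNReal} (hf : Measurable[invSigma R hsymm] f)
    {s : Set X} (hs : MeasurableSet s) (hsc : DTClosed R s) :
    ∫⁻ a in s, f a ∂μ = ∫⁻ a in s, f a ∂ν := by
  have hle : invSigma R hsymm ≤ m0 := fun B hB => hB.1
  have hs' : MeasurableSet[invSigma R hsymm] s := ⟨hs, hsc⟩
  have htrim : μ.trim hle = ν.trim hle := by
    refine @Measure.ext _ (invSigma R hsymm) _ _ fun B hB => ?_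
    rw [trim_measurableSet_eq hle hB, trim_measurableSet_eq hle hB]
    exact h B hB.1 hB.2
  calc ∫⁻ a in s, f a ∂μ
      = ∫⁻ a, f a ∂((μ.restrict s).trim hle) := (lintegral_trim hle hf).symm
    _ = ∫⁻ a, f a ∂((μ.trim hle).restrict s) := by rw [← restrict_trim hle μ hs']
    _ = ∫⁻ a, f a ∂((ν.trim hle).restrict s) := by rw [htrim]
    _ = ∫⁻ a, f a ∂((ν.restrict s).trim hle) := by rw [← restrict_trim hle ν hs']
    _ = ∫⁻ a in s, f a ∂ν := lintegral_trim hle hf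

lemma iterInt_props {X : Type*} [MeasurableSpace X] (τ : Kernel X X) [IsSFiniteKernel τ]
    {AP : Type*} (χ : AP → X → Bool) (R : X → X → Prop) (hR : IsDTBisim τ χ R) :
    ∀ (n : ℕ) (A : Fin n → Set X), (∀ i, MeasurableSet (A i) ∧ DTClosed R (A i)) →
      Measurable (iterInt τ n A) ∧ ∀ x y, R x y → iterInt τ n A x = iterInt τ n A y := by
  intro n
  induction n with
  | zero => intro A hA; exact ⟨measurable_const, fun _ _ _ => rfl⟩
  | succ n ih =>
    intro A hA
    have hsymm : ∀ x y, R x y → R y x := fun x y => hR.1.symm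
    obtain ⟨hgmeas, hginv⟩ := ih (fun i => A i.succ) (fun i => hA i.succ)
    have hg' : Measurable[invSigma R hsymm] (iterInt τ n (fun i => A i.succ)) := by
      intro t ht
      refine ⟨hgmeas ht, ?_⟩
      intro a ha b hab
      simpa [Set.mem_preimage, ← hginv a b hab] using ha
    constructor
    · exact Measurable.setLIntegral_kernel hgmeas (hA 0).1
    · intro x y hxy
      exact key_lintegral_eq hsymm (τ x) (τ y) (hR.2 x y hxy).2 hg' (hA 0).1 (hA 0).2

theorem dtbisim_iterated_integrals_eq
    {X : Type*} [MeasurableSpace X] (τ : Kernel X X) [IsMarkovKernel τ]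
    {AP : Type*} (χ : AP → X → Bool) (R : X → X → Prop)
    (hR : IsDTBisim τ χ R) (x y : X) (hxy : R x y)
    (n : ℕ) (hn : 1 ≤ n) (A : Fin n → Set X)
    (hA : ∀ i, MeasurableSet (A i) ∧ DTClosed R (A i)) :
    iterInt τ n A x = iterInt τ n A y :=
  (iterInt_props τ χ R hR n A hA).2 x y hxy
end

section
/- Let τ be a Markov kernel on a measurable space (X, Σ) and R a DT-bisimulation for τ. For x ∈ X, let ℙ_x be the law on (ℕ → X), with the product σ-algebra, of the Markov chain with transition kernel τ started at x (given by the Ionescu–Tulcea construction). If x R y, then for every n ∈ ℕ and every family A₀, …, Aₙ of R-closed measurable subsets of X, ℙ_x({ω | ∀ i ≤ n, ω i ∈ A_i}) = ℙ_y({ω | ∀ i ≤ n, ω i ∈ A_i}). -/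
open MeasureTheory ProbabilityTheory

/-- `P` is the family of laws on `ℕ → X` (product σ-algebra) of the Markov chain
with transition kernel `τ` started at each point (as given by the Ionescu–Tulcea
construction): each `P x` is a probability measure whose finite-dimensional
cylinder probabilities are the iterated integrals of `τ` with start `x`. -/
def IsChainLaw {X : Type*} [MeasurableSpace X] (τ : Kernel X X)
    (P : X → Measure (ℕ → X)) : Prop :=
  (∀ x, IsProbabilityMeasure (P x)) ∧
    ∀ (x : X) (n : ℕ) (A : Fin (n + 1) → Set X), (∀ i, MeasurableSet (A i)) →
      P x {ω : ℕ → X | ∀ i : Fin (n + 1), ω i ∈ A i} =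
        (A 0).indicator (fun _ => (1 : ENNReal)) x * iterInt τ n (fun i => A i.succ) x

/-- The σ-algebra of measurable R-closed sets. -/
def bisimMS {X : Type*} [m : MeasurableSpace X] (R : X → X → Prop)
    (hsymm : ∀ {a b}, R a b → R b a) : MeasurableSpace X where
  MeasurableSet' S := MeasurableSet S ∧ DTClosed R S
  measurableSet_empty := ⟨MeasurableSet.empty, fun x hx => hx.elim⟩
  measurableSet_compl := fun S hS =>
    ⟨hS.1.compl, fun x hx y hxy hyS => hx (hS.2 y hyS x (hsymm hxy))⟩
  measurableSet_iUnion := fun f hf =>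
    ⟨MeasurableSet.iUnion fun i => (hf i).1, by
      rintro x ⟨s, ⟨i, rfl⟩, hx⟩ y hxy
      exact ⟨f i, ⟨i, rfl⟩, (hf i).2 x hx y hxy⟩⟩

lemma bisimMS_le {X : Type*} [m : MeasurableSpace X] (R : X → X → Prop)
    (hsymm : ∀ {a b}, R a b → R b a) : bisimMS R hsymm ≤ m := fun _ hS => hS.1

lemma measurable_bisimMS {X : Type*} [m : MeasurableSpace X] {R : X → X → Prop}
    (hsymm : ∀ {a b}, R a b → R b a) {f : X → ENNReal} (hf : Measurable f)
    (hinv : ∀ a b, R a b → f a = f b) : Measurable[bisimMS R hsymm] f := by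
  intro s hs
  exact ⟨hf hs, fun a ha b hab => by
    simp only [Set.mem_preimage] at *; rw [← hinv a b hab]; exact ha⟩

lemma invariant_of_bisimMS {X : Type*} [m : MeasurableSpace X] {R : X → X → Prop}
    {hsymm : ∀ {a b}, R a b → R b a} {f : X → ENNReal}
    (hf : Measurable[bisimMS R hsymm] f) : ∀ a b, R a b → f a = f b := by
  intro a b hab
  have h := hf (measurableSet_singleton (f a))
  exact (h.2 a rfl b hab).symm

lemma lintegral_eq_of_agree {X : Type*} [m : MeasurableSpace X] {R : X → X → Prop}
    (hsymm : ∀ {a b}, R a b → R b a) {μ ν : Measure X}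
    (h : ∀ S : Set X, MeasurableSet S → DTClosed R S → μ S = ν S)
    {f : X → ENNReal} (hf : Measurable[bisimMS R hsymm] f) :
    ∫⁻ a, f a ∂μ = ∫⁻ a, f a ∂ν := by
  have htrim : μ.trim (bisimMS_le R hsymm) = ν.trim (bisimMS_le R hsymm) := by
    refine @Measure.ext _ (bisimMS R hsymm) _ _ (fun s hs => ?_)
    rw [trim_measurableSet_eq _ hs, trim_measurableSet_eq _ hs]
    exact h s hs.1 hs.2
  rw [← lintegral_trim (bisimMS_le R hsymm) hf, htrim, lintegral_trim (bisimMS_le R hsymm) hf]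

lemma iterInt_bisimMeasurable {X : Type*} [m : MeasurableSpace X] (τ : Kernel X X)
    {AP : Type*} {χ : AP → X → Bool} {R : X → X → Prop}
    [IsSFiniteKernel τ] (hR : IsDTBisim τ χ R) (hsymm : ∀ {a b}, R a b → R b a) :
    ∀ (n : ℕ) (A : Fin n → Set X), (∀ i, MeasurableSet (A i) ∧ DTClosed R (A i)) →
      Measurable[bisimMS R hsymm] (iterInt τ n A) := by
  intro n
  induction n with
  | zero => intro A hA; exact @measurable_const _ _ _ (bisimMS R hsymm) _
  | succ n ih =>
    intro A hA
    have hg := ih (fun i => A i.succ) (fun i => hA i.succ)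
    have hgm : Measurable (iterInt τ n (fun i => A i.succ)) :=
      hg.mono (bisimMS_le R hsymm) le_rfl
    have hind : Measurable ((A 0).indicator (iterInt τ n (fun i => A i.succ))) :=
      hgm.indicator (hA 0).1
    have heq : iterInt τ (n + 1) A =
        fun x => ∫⁻ y, (A 0).indicator (iterInt τ n (fun i => A i.succ)) y ∂(τ x) := by
      funext x
      rw [lintegral_indicator (hA 0).1]
      rfl
    rw [heq]
    refine measurable_bisimMS hsymm (hind.lintegral_kernel (κ := τ)) (fun a b hab => ?_)
    refine lintegral_eq_of_agree hsymm (fun S hSm hSc => (hR.2 a b hab).2 S hSm hSc) ?_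
    have hA0 : MeasurableSet[bisimMS R hsymm] (A 0) := ⟨(hA 0).1, (hA 0).2⟩
    exact Measurable.indicator (m := bisimMS R hsymm) hg hA0

theorem dtbisim_chainLaw_cylinders_eq
    {X : Type*} [MeasurableSpace X] (τ : Kernel X X) [IsMarkovKernel τ]
    {AP : Type*} (χ : AP → X → Bool) (R : X → X → Prop)
    (hR : IsDTBisim τ χ R)
    (P : X → Measure (ℕ → X)) (hP : IsChainLaw τ P)
    (x y : X) (hxy : R x y)
    (n : ℕ) (A : Fin (n + 1) → Set X)
    (hA : ∀ i, MeasurableSet (A i) ∧ DTClosed R (A i)) :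
    P x {ω : ℕ → X | ∀ i : Fin (n + 1), ω i ∈ A i} =
      P y {ω : ℕ → X | ∀ i : Fin (n + 1), ω i ∈ A i} := by
  have hsymm : ∀ {a b : X}, R a b → R b a := fun h => hR.1.symm h
  rw [hP.2 x n A (fun i => (hA i).1), hP.2 y n A (fun i => (hA i).1)]
  have h1 : (A 0).indicator (fun _ => (1 : ENNReal)) x =
      (A 0).indicator (fun _ => (1 : ENNReal)) y := by
    by_cases hx0 : x ∈ A 0
    · rw [Set.indicator_of_mem hx0, Set.indicator_of_mem ((hA 0).2 x hx0 y hxy)]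
    · rw [Set.indicator_of_notMem hx0, Set.indicator_of_notMem
        (fun hy0 => hx0 ((hA 0).2 y hy0 x (hsymm hxy)))]
  have h2 := invariant_of_bisimMS
    (iterInt_bisimMeasurable τ hR hsymm n (fun i => A i.succ) (fun i => hA i.succ)) x y hxy
  rw [h1, h2]
end

section
/- Let τ be a Markov kernel on a measurable space (X, Σ). Let R be an equivalence relation on X such that whenever x R y: (a) χ_A(x) = χ_A(y) for every atomic proposition A ∈ AP, and (b) ℙ_x(B) = ℙ_y(B) for every measurable set B ⊆ (ℕ → X) that is R-closed (meaning ω ∈ B together with R (ω n) (ω' n) for all n ∈ ℕ implies ω' ∈ B). Then R is a DT-bisimulation: for all x R y and every R-closed measurable set C ∈ Σ, τ(x, C) = τ(y, C). -/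
open MeasureTheory ProbabilityTheory

/-- A set of discrete trajectories `B ⊆ (ℕ → X)` is `R`-closed. -/
def TrajClosed {X : Type*} (R : X → X → Prop) (B : Set (ℕ → X)) : Prop :=
  ∀ ω ∈ B, ∀ ω' : ℕ → X, (∀ n, R (ω n) (ω' n)) → ω' ∈ B

theorem trajectory_conditions_imply_dtbisim
    {X : Type*} [MeasurableSpace X] (τ : Kernel X X) [IsMarkovKernel τ]
    {AP : Type*} (χ : AP → X → Bool) (R : X → X → Prop) (hEquiv : Equivalence R)
    (P : X → Measure (ℕ → X)) (hP : IsChainLaw τ P)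
    (hobs : ∀ x y, R x y → ∀ A : AP, χ A x = χ A y)
    (htraj : ∀ x y, R x y → ∀ B : Set (ℕ → X),
      MeasurableSet B → TrajClosed R B → P x B = P y B) :
    IsDTBisim τ χ R := by
  refine ⟨hEquiv, fun x y hxy => ⟨hobs x y hxy, fun C hC hCl => ?_⟩⟩
  -- key: for any z, P z {ω | ω 1 ∈ C} = τ z C
  have key : ∀ z : X, P z {ω : ℕ → X | ω 1 ∈ C} = τ z C := by
    intro z
    have h := hP.2 z 1 (fun i => if i = 0 then Set.univ else C)
      (by intro i; split <;> [exact MeasurableSet.univ; exact hC])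
    have hset : {ω : ℕ → X | ∀ i : Fin 2, ω i ∈ (if i = 0 then Set.univ else C)}
        = {ω : ℕ → X | ω 1 ∈ C} := by
      ext ω
      simp only [Set.mem_setOf_eq]
      constructor
      · intro h; have := h 1; simpa using this
      · intro h i
        fin_cases i <;> simp [h]
    rw [hset] at h
    rw [h]
    simp only [Set.indicator_univ, iterInt, if_pos rfl, one_mul]
    have : (fun i : Fin 1 => if (i.succ : Fin 2) = 0 then Set.univ else C) 0 = C := by
      simp
    rw [show (if ((0 : Fin 1).succ : Fin 2) = 0 then Set.univ else C) = C by simp]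
    simp [iterInt, MeasureTheory.setLIntegral_one]
  have hB : MeasurableSet {ω : ℕ → X | ω 1 ∈ C} := (measurable_pi_apply 1) hC
  have hTC : TrajClosed R {ω : ℕ → X | ω 1 ∈ C} := by
    intro ω hω ω' hR
    exact hCl _ hω _ (hR 1)
  rw [← key x, ← key y, htraj x y hxy _ hB hTC]
end

section
/- Fix a > 0 and for z ∈ (0,1) define g_z : ℝ → ℝ by g_z(k) = sinh((1−z)·k)·e^{−a·z} + sinh(z·k)·e^{a·(1−z)}. If z₁, z₂ ∈ (0,1) satisfy g_{z₁}(k) = g_{z₂}(k) for all k ≥ a, then z₁ = z₂. -/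
open Filter Real

lemma expLim (b : ℝ) (hb : b ≤ 0) :
    Tendsto (fun k => Real.exp (b * k)) atTop (nhds (if b = 0 then 1 else 0)) := by
  rcases hb.lt_or_eq with h | h
  · rw [if_neg h.ne]
    exact Real.tendsto_exp_atBot.comp (Tendsto.const_mul_atTop_of_neg h tendsto_id)
  · subst h; simp

lemma glim (a z c : ℝ) (hz : z ∈ Set.Ioo (0:ℝ) 1) (hc : max z (1 - z) ≤ c) :
    Tendsto (fun k => (Real.sinh ((1 - z) * k) * Real.exp (-(a * z)) +
        Real.sinh (z * k) * Real.exp (a * (1 - z))) * Real.exp (-c * k)) atTop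
      (nhds (((if 1 - z - c = 0 then Real.exp (-(a * z)) else 0) +
        (if z - c = 0 then Real.exp (a * (1 - z)) else 0)) / 2)) := by
  have hc0 : 0 < c := lt_of_lt_of_le (lt_of_lt_of_le hz.1 (le_max_left _ _)) hc
  have h1 : 1 - z - c ≤ 0 := by have := le_max_right z (1 - z); linarith
  have h3 : z - c ≤ 0 := by have := le_max_left z (1 - z); linarith
  have h2 : -(1 - z) - c < 0 := by have := hz.2; linarith
  have h4 : -z - c < 0 := by have := hz.1; linarith
  have key : ∀ k : ℝ, (Real.sinh ((1 - z) * k) * Real.exp (-(a * z)) +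
        Real.sinh (z * k) * Real.exp (a * (1 - z))) * Real.exp (-c * k) =
      (Real.exp ((1 - z - c) * k) * Real.exp (-(a * z)) -
       Real.exp ((-(1 - z) - c) * k) * Real.exp (-(a * z)) +
       Real.exp ((z - c) * k) * Real.exp (a * (1 - z)) -
       Real.exp ((-z - c) * k) * Real.exp (a * (1 - z))) / 2 := by
    intro k
    rw [show (1 - z - c) * k = (1 - z) * k + -c * k by ring,
      show (-(1 - z) - c) * k = -((1 - z) * k) + -c * k by ring,
      show (z - c) * k = z * k + -c * k by ring,
      show (-z - c) * k = -(z * k) + -c * k by ring,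
      Real.exp_add, Real.exp_add, Real.exp_add, Real.exp_add,
      Real.sinh_eq, Real.sinh_eq]
    ring
  have T := ((((((expLim _ h1).mul_const (Real.exp (-(a * z)))).sub
      ((expLim _ h2.le).mul_const (Real.exp (-(a * z))))).add
      ((expLim _ h3).mul_const (Real.exp (a * (1 - z))))).sub
      ((expLim _ h4.le).mul_const (Real.exp (a * (1 - z))))).div_const 2)
  rw [if_neg h2.ne, if_neg h4.ne] at T
  refine Tendsto.congr (fun k => (key k).symm) ?_
  convert T using 2
  split_ifs <;> ring

theorem laplace_transform_injective_g (a : ℝ) (ha : 0 < a) (z₁ z₂ : ℝ)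
    (hz₁ : z₁ ∈ Set.Ioo (0 : ℝ) 1) (hz₂ : z₂ ∈ Set.Ioo (0 : ℝ) 1)
    (h : ∀ k : ℝ, a ≤ k →
      Real.sinh ((1 - z₁) * k) * Real.exp (-(a * z₁)) +
          Real.sinh (z₁ * k) * Real.exp (a * (1 - z₁)) =
        Real.sinh ((1 - z₂) * k) * Real.exp (-(a * z₂)) +
          Real.sinh (z₂ * k) * Real.exp (a * (1 - z₂))) :
    z₁ = z₂ := by
  have hEv : ∀ c : ℝ,
      (fun k => (Real.sinh ((1 - z₁) * k) * Real.exp (-(a * z₁)) +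
        Real.sinh (z₁ * k) * Real.exp (a * (1 - z₁))) * Real.exp (-c * k)) =ᶠ[atTop]
      (fun k => (Real.sinh ((1 - z₂) * k) * Real.exp (-(a * z₂)) +
        Real.sinh (z₂ * k) * Real.exp (a * (1 - z₂))) * Real.exp (-c * k)) := by
    intro c
    filter_upwards [eventually_ge_atTop a] with k hk
    rw [h k hk]
  -- Step 1: the maxima agree
  have hm : max z₁ (1 - z₁) = max z₂ (1 - z₂) := by
    by_contra hne
    have Lpos : ∀ z : ℝ, z ∈ Set.Ioo (0:ℝ) 1 →
        0 < ((if 1 - z - max z (1 - z) = 0 then Real.exp (-(a * z)) else 0) +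
          (if z - max z (1 - z) = 0 then Real.exp (a * (1 - z)) else 0)) / 2 := by
      intro z hz
      rcases max_choice z (1 - z) with hmc | hmc
      · rw [hmc]
        have : z - z = 0 := by ring
        rw [if_pos this]
        positivity
      · rw [hmc]
        have : 1 - z - (1 - z) = 0 := by ring
        rw [if_pos this]
        positivity
    rcases (Ne.lt_or_gt hne) with hlt | hlt
    · have t1 := glim a z₁ (max z₂ (1 - z₂)) hz₁ hlt.le
      have t2 := glim a z₂ (max z₂ (1 - z₂)) hz₂ le_rfl
      have hu := tendsto_nhds_unique (t1.congr' (hEv _)) t2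
      have e1 : 1 - z₁ - max z₂ (1 - z₂) ≠ 0 := by
        have := le_max_right z₁ (1 - z₁); exact ne_of_lt (by linarith)
      have e2 : z₁ - max z₂ (1 - z₂) ≠ 0 := by
        have := le_max_left z₁ (1 - z₁); exact ne_of_lt (by linarith)
      rw [if_neg e1, if_neg e2] at hu
      have := Lpos z₂ hz₂
      rw [← hu] at this
      norm_num at this
    · have t1 := glim a z₁ (max z₁ (1 - z₁)) hz₁ le_rfl
      have t2 := glim a z₂ (max z₁ (1 - z₁)) hz₂ hlt.le
      have hu := tendsto_nhds_unique (t1.congr' (hEv _)) t2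
      have e1 : 1 - z₂ - max z₁ (1 - z₁) ≠ 0 := by
        have := le_max_right z₂ (1 - z₂); exact ne_of_lt (by linarith)
      have e2 : z₂ - max z₁ (1 - z₁) ≠ 0 := by
        have := le_max_left z₂ (1 - z₂); exact ne_of_lt (by linarith)
      rw [if_neg e1, if_neg e2] at hu
      have := Lpos z₁ hz₁
      rw [hu] at this
      norm_num at this
  -- Step 2: equal limits at c = common max
  have t1 := glim a z₁ (max z₁ (1 - z₁)) hz₁ le_rfl
  have t2 := glim a z₂ (max z₁ (1 - z₁)) hz₂ (le_of_eq hm.symm)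
  have hL := tendsto_nhds_unique (t1.congr' (hEv _)) t2
  rcases le_total z₁ (1 - z₁) with hc1 | hc1 <;> rcases le_total z₂ (1 - z₂) with hc2 | hc2
  · -- both maxima are 1 - z
    rw [max_eq_right hc1, max_eq_right hc2] at hm
    linarith
  · -- max₁ = 1 - z₁, max₂ = z₂, so 1 - z₁ = z₂
    rw [max_eq_right hc1, max_eq_left hc2] at hm
    rw [max_eq_right hc1] at hL
    by_cases h12 : z₁ = 1 - z₁
    · linarith
    have hlt : z₁ < 1 - z₁ := lt_of_le_of_ne hc1 h12
    have e1 : 1 - z₁ - (1 - z₁) = 0 := by ring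
    have e2 : z₁ - (1 - z₁) ≠ 0 := by intro hx; apply h12; linarith
    have e3 : 1 - z₂ - (1 - z₁) ≠ 0 := by intro hx; apply h12; linarith
    have e4 : z₂ - (1 - z₁) = 0 := by linarith
    rw [if_pos e1, if_neg e2, if_neg e3, if_pos e4] at hL
    have hexp : Real.exp (-(a * z₁)) = Real.exp (a * (1 - z₂)) := by linarith
    have := Real.exp_injective hexp
    have : a * z₁ = 0 := by nlinarith
    have := hz₁.1
    nlinarith
  · -- max₁ = z₁, max₂ = 1 - z₂
    rw [max_eq_left hc1, max_eq_right hc2] at hm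
    rw [max_eq_left hc1] at hL
    by_cases h12 : z₁ = 1 - z₁
    · linarith
    have hlt : 1 - z₁ < z₁ := lt_of_le_of_ne hc1 (Ne.symm h12)
    have e1 : 1 - z₁ - z₁ ≠ 0 := by intro hx; apply h12; linarith
    have e2 : z₁ - z₁ = 0 := by ring
    have e3 : 1 - z₂ - z₁ = 0 := by linarith
    have e4 : z₂ - z₁ ≠ 0 := by intro hx; apply h12; linarith
    rw [if_neg e1, if_pos e2, if_pos e3, if_neg e4] at hL
    have hexp : Real.exp (a * (1 - z₁)) = Real.exp (-(a * z₂)) := by linarith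
    have := Real.exp_injective hexp
    have : a * (1 - z₁) = 0 := by nlinarith
    have := hz₁.2
    nlinarith
  · -- both maxima are z
    rw [max_eq_left hc1, max_eq_left hc2] at hm
    linarith
end
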